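/- Descent of the penalized coordinate update: suppose ℓ : ℝ → ℝ is twice differentiable with -ℓ''(x)/n ≤ D for all x, D > 0, and let J(x) = -(1/n)ℓ(x) + λ(αω|x| + ((1-α)/2)x²) with λ ≥ 0, α ∈ [0,1], ω ≥ 0. Then the update x₁ = s(D·x₀ + (1/n)ℓ'(x₀), λαω)/(D + λ(1-α)) satisfies J(x₁) ≤ J(x₀). -/

import Mathlib

/-- The soft-thresholding operator `s(a,b) = (|a| - b)₊ · sign(a)`. -/
noncomputable def softThreshold (a b : ℝ) : ℝ := max (|a| - b) 0 * Real.sign a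

/-!
Adding `D/2 · x²` to `ℓ/n` makes it convex, so `-ℓ/n` lies below its tangent
line at `x₀` plus `D/2 · (x - x₀)²`. Replacing the loss by this quadratic majorant,
the penalized objective becomes `A/2 · x² - b x + t |x| + const` with
`A = D + λ(1-α)`, `b = D x₀ + ℓ'(x₀)/n`, `t = λαω`, whose minimizer is
`x₁ = s(b, t)/A`. Hence `J x₁ ≤ majorant(x₁) ≤ majorant(x₀) = J x₀`.
-/

lemma ConvexOn.add_deriv_mul_sub_le {S : Set ℝ} {f : ℝ → ℝ} (hf : ConvexOn ℝ S f)
    {x₀ x d : ℝ} (hx₀ : x₀ ∈ S) (hx : x ∈ S) (hd : HasDerivAt f d x₀) :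
    f x₀ + d * (x - x₀) ≤ f x := by
  rcases lt_trichotomy x₀ x with hlt | rfl | hgt
  · have := hf.le_slope_of_hasDerivAt hx₀ hx hlt hd
    rw [slope_def_field, le_div_iff₀ (sub_pos.mpr hlt)] at this
    linarith
  · simp
  · have := hf.slope_le_of_hasDerivAt hx hx₀ hgt hd
    rw [slope_def_field, div_le_iff₀ (sub_pos.mpr hgt)] at this
    linarith

lemma add_deriv_mul_sub_sub_sq_le_of_deriv2_ge {f f' f'' : ℝ → ℝ} {D : ℝ}
    (hf : ∀ x, HasDerivAt f (f' x) x) (hf' : ∀ x, HasDerivAt f' (f'' x) x)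
    (hD : ∀ x, -D ≤ f'' x) (x₀ x : ℝ) :
    f x₀ + f' x₀ * (x - x₀) - D / 2 * (x - x₀) ^ 2 ≤ f x := by
  have hg : ∀ y, HasDerivAt (fun y => D / 2 * y ^ 2 + f y) (D * y + f' y) y := fun y =>
    (((hasDerivAt_pow 2 y).const_mul (D / 2)).add (hf y)).congr_deriv (by push_cast; ring)
  have hg' : ∀ y, HasDerivAt (fun y => D * y + f' y) (D + f'' y) y := fun y =>
    (((hasDerivAt_id y).const_mul D).add (hf' y)).congr_deriv (by simp)
  have hconv : ConvexOn ℝ Set.univ (fun y => D / 2 * y ^ 2 + f y) :=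
    convexOn_of_hasDerivWithinAt2_nonneg convex_univ
      (fun y _ => (hg y).continuousAt.continuousWithinAt)
      (fun y _ => (hg y).hasDerivWithinAt) (fun y _ => (hg' y).hasDerivWithinAt)
      (fun y _ => by linarith [hD y])
  have := hconv.add_deriv_mul_sub_le (Set.mem_univ x₀) (Set.mem_univ x) (hg x₀)
  linarith

/-- The hypotheses say that `b - A u` is a subgradient of `t |·|` at `u`. -/
lemma quadratic_sub_add_abs_le_of_subgradient {A b t u : ℝ} (hA : 0 ≤ A)
    (hbound : |b - A * u| ≤ t) (hcompl : (b - A * u) * u = t * |u|) (x : ℝ) :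
    A / 2 * u ^ 2 - b * u + t * |u| ≤ A / 2 * x ^ 2 - b * x + t * |x| := by
  have hx : (b - A * u) * x ≤ t * |x| :=
    calc (b - A * u) * x ≤ |b - A * u| * |x| := by rw [← abs_mul]; exact le_abs_self _
      _ ≤ t * |x| := mul_le_mul_of_nonneg_right hbound (abs_nonneg x)
  nlinarith [mul_nonneg hA (sq_nonneg (x - u))]

lemma abs_sub_softThreshold_le (b : ℝ) {t : ℝ} (ht : 0 ≤ t) :
    |b - softThreshold b t| ≤ t := by
  unfold softThreshold
  rcases lt_trichotomy b 0 with hb | rfl | hb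
  · rw [Real.sign_of_neg hb, abs_of_neg hb]
    rcases le_total (-b - t) 0 with h | h
    · rw [max_eq_right h, abs_le]; constructor <;> linarith
    · rw [max_eq_left h, abs_le]; constructor <;> linarith
  · simpa using ht
  · rw [Real.sign_of_pos hb, abs_of_pos hb]
    rcases le_total (b - t) 0 with h | h
    · rw [max_eq_right h, abs_le]; constructor <;> linarith
    · rw [max_eq_left h, abs_le]; constructor <;> linarith

lemma sub_softThreshold_mul_softThreshold (b t : ℝ) :
    (b - softThreshold b t) * softThreshold b t = t * |softThreshold b t| := by
  unfold softThreshold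
  rcases lt_trichotomy b 0 with hb | rfl | hb
  · rw [Real.sign_of_neg hb, abs_of_neg hb]
    rcases le_total (-b - t) 0 with h | h
    · simp [max_eq_right h]
    · rw [max_eq_left h, abs_of_nonpos (by linarith)]; ring
  · simp
  · rw [Real.sign_of_pos hb, abs_of_pos hb]
    rcases le_total (b - t) 0 with h | h
    · simp [max_eq_right h]
    · rw [max_eq_left h, abs_of_nonneg (by linarith)]; ring

lemma quadratic_sub_add_abs_le_of_eq_softThreshold_div {A b t x₁ : ℝ} (hA : 0 < A)
    (ht : 0 ≤ t) (hx₁ : x₁ = softThreshold b t / A) (x : ℝ) :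
    A / 2 * x₁ ^ 2 - b * x₁ + t * |x₁| ≤ A / 2 * x ^ 2 - b * x + t * |x| := by
  have hAx₁ : A * x₁ = softThreshold b t := by rw [hx₁, mul_div_cancel₀ _ hA.ne']
  refine quadratic_sub_add_abs_le_of_subgradient hA.le ?_ ?_ x
  · rw [hAx₁]; exact abs_sub_softThreshold_le b ht
  · have := sub_softThreshold_mul_softThreshold b t
    rw [← hAx₁, abs_mul, abs_of_pos hA] at this
    exact mul_left_cancel₀ hA.ne' (by linear_combination this)

theorem cmd_update_descent_general
    (ℓ ℓ' ℓ'' : ℝ → ℝ) (n : ℕ) (D : ℝ) (hD : 0 < D)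
    (hd1 : ∀ x, HasDerivAt ℓ (ℓ' x) x)
    (hd2 : ∀ x, HasDerivAt ℓ' (ℓ'' x) x)
    (hcurv : ∀ x, -ℓ'' x / (n : ℝ) ≤ D)
    (lam alpha omega : ℝ) (hlam : 0 ≤ lam) (halpha : alpha ∈ Set.Icc (0 : ℝ) 1)
    (homega : 0 ≤ omega)
    (J : ℝ → ℝ)
    (hJ : J = fun x => -(1 / (n : ℝ)) * ℓ x +
        lam * (alpha * omega * |x| + ((1 - alpha) / 2) * x ^ 2))
    (x₀ x₁ : ℝ)
    (hx₁ : x₁ = softThreshold (D * x₀ + (1 / (n : ℝ)) * ℓ' x₀)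
        (lam * alpha * omega) / (D + lam * (1 - alpha))) :
    J x₁ ≤ J x₀ := by
  obtain ⟨hα0, hα1⟩ := halpha
  have hmajor := add_deriv_mul_sub_sub_sq_le_of_deriv2_ge (f := fun x => 1 / (n : ℝ) * ℓ x)
    (f'' := fun x => 1 / (n : ℝ) * ℓ'' x) (D := D)
    (fun x => (hd1 x).const_mul _) (fun x => (hd2 x).const_mul _)
    (fun x => by rw [one_div_mul_eq_div, ← neg_le, ← neg_div]; exact hcurv x) x₀ x₁
  have hmin := quadratic_sub_add_abs_le_of_eq_softThreshold_div
    (by nlinarith : 0 < D + lam * (1 - alpha)) (by positivity) hx₁ x₀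
  subst hJ
  dsimp only at hmajor ⊢
  linarith

/-- Descent of the penalized coordinate update (Lemma 1/2 of the paper,
specialized to one coordinate). -/
theorem cmd_update_descent
    (ℓ ℓ' ℓ'' : ℝ → ℝ) (n : ℕ) (hn : 0 < n) (D : ℝ) (hD : 0 < D)
    (hd1 : ∀ x, HasDerivAt ℓ (ℓ' x) x)
    (hd2 : ∀ x, HasDerivAt ℓ' (ℓ'' x) x)
    (hcurv : ∀ x, -ℓ'' x / (n : ℝ) ≤ D)
    (lam alpha omega : ℝ) (hlam : 0 ≤ lam) (halpha : alpha ∈ Set.Icc (0 : ℝ) 1)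
    (homega : 0 ≤ omega)
    (J : ℝ → ℝ)
    (hJ : J = fun x => -(1 / (n : ℝ)) * ℓ x +
        lam * (alpha * omega * |x| + ((1 - alpha) / 2) * x ^ 2))
    (x₀ x₁ : ℝ)
    (hx₁ : x₁ = softThreshold (D * x₀ + (1 / (n : ℝ)) * ℓ' x₀)
        (lam * alpha * omega) / (D + lam * (1 - alpha))) :
    J x₁ ≤ J x₀ :=
  cmd_update_descent_general ℓ ℓ' ℓ'' n D hD hd1 hd2 hcurv lam alpha omega hlam halpha homega J hJ
    x₀ x₁ hx₁
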